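/- arXiv:1205.6502 — 4 statements merged into one kernel-verified Lean document; each statement's English description precedes it below -/
import Mathlib

section
/- Let γ=(γ1,γ2) be a weight and δ=γ1+γ2. Every vector quasi-homogeneous polynomial Q=(Q1,Q2) of generalized degree k≥0 can be written uniquely in the form Q = (−∂I/∂x2, ∂I/∂x1) + J·E_γ, where I is a quasi-homogeneous polynomial of g.d. k+δ and J is a quasi-homogeneous polynomial of g.d. k; moreover J = div(Q)/(k+δ). -/
open MvPolynomial

/-- A planar polynomial vector field `P = (P1, P2)` applied to a polynomial `f`:
`P(f) = P1·∂f/∂x1 + P2·∂f/∂x2`. -/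
noncomputable def applyVF (P : MvPolynomial (Fin 2) ℝ × MvPolynomial (Fin 2) ℝ)
    (f : MvPolynomial (Fin 2) ℝ) : MvPolynomial (Fin 2) ℝ :=
  P.1 * pderiv 0 f + P.2 * pderiv 1 f

/-- The Lie bracket of two planar polynomial vector fields:
`[P,Q] = (P(Q1) − Q(P1), P(Q2) − Q(P2))`. -/
noncomputable def lieVF (P Q : MvPolynomial (Fin 2) ℝ × MvPolynomial (Fin 2) ℝ) :
    MvPolynomial (Fin 2) ℝ × MvPolynomial (Fin 2) ℝ :=
  (applyVF P Q.1 - applyVF Q P.1, applyVF P Q.2 - applyVF Q P.2)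

/-- The Euler vector field `E_γ = (γ1·x1, γ2·x2)`. -/
noncomputable def eulerVF (γ1 γ2 : ℕ) : MvPolynomial (Fin 2) ℝ × MvPolynomial (Fin 2) ℝ :=
  ((γ1 : ℝ) • X 0, (γ2 : ℝ) • X 1)

/-- The Hamiltonian vector field `(−∂H/∂x2, ∂H/∂x1)` of a polynomial `H`. -/
noncomputable def hamVF (H : MvPolynomial (Fin 2) ℝ) :
    MvPolynomial (Fin 2) ℝ × MvPolynomial (Fin 2) ℝ :=
  (-(pderiv 1 H), pderiv 0 H)

/-- Multiplication of a planar vector field by a scalar polynomial. -/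
noncomputable def smulVF (J : MvPolynomial (Fin 2) ℝ)
    (P : MvPolynomial (Fin 2) ℝ × MvPolynomial (Fin 2) ℝ) :
    MvPolynomial (Fin 2) ℝ × MvPolynomial (Fin 2) ℝ :=
  (J * P.1, J * P.2)

/-- The divergence `∂P1/∂x1 + ∂P2/∂x2` of a planar polynomial vector field. -/
noncomputable def divVF (P : MvPolynomial (Fin 2) ℝ × MvPolynomial (Fin 2) ℝ) :
    MvPolynomial (Fin 2) ℝ :=
  pderiv 0 P.1 + pderiv 1 P.2

/-!
For `f` quasi-homogeneous of g.d. `d` the Euler identity reads `E_γ(f) = d·f`. Hamiltonian fields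
`X_I = (−∂I/∂x2, ∂I/∂x1)` are divergence-free, so `div (X_I + J·E_γ) = E_γ(J) + δ·J = (k+δ)·J`;
wedging with `E_γ` kills `J·E_γ` and turns `X_I` into `E_γ(I) = (k+δ)·I`. Hence `I` and `J` are
determined by `Q`, namely `I = (E_γ ∧ Q)/(k+δ)` and `J = div Q/(k+δ)`, and conversely the Euler
identities for `Q1` and `Q2` show that this pair does decompose `Q`.
-/

namespace MvPolynomial

theorem pderiv_pderiv_comm {σ R : Type*} [CommRing R] (i j : σ) (f : MvPolynomial σ R) :
    pderiv i (pderiv j f) = pderiv j (pderiv i f) := by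
  suffices ⁅pderiv i, pderiv j⁆ = (0 : Derivation R (MvPolynomial σ R) (MvPolynomial σ R)) by
    rw [← sub_eq_zero, ← Derivation.commutator_apply, this, Derivation.zero_apply]
  classical
  exact derivation_ext fun k => by
    simp [Derivation.commutator_apply, pderiv_X, Pi.single_apply, apply_ite]

end MvPolynomial

local notation "Poly" => MvPolynomial (Fin 2) ℝ

noncomputable def wedgeVF (P Q : Poly × Poly) : Poly :=
  P.1 * Q.2 - P.2 * Q.1

section VectorFields

variable (P Q R : Poly × Poly) (H J : Poly) (c : ℝ)

theorem divVF_add : divVF (P + Q) = divVF P + divVF Q := by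
  simp only [divVF, Prod.fst_add, Prod.snd_add, map_add]
  ring

theorem wedgeVF_add : wedgeVF P (Q + R) = wedgeVF P Q + wedgeVF P R := by
  simp only [wedgeVF, Prod.fst_add, Prod.snd_add]
  ring

theorem hamVF_smul : hamVF (c • H) = c • hamVF H := by
  simp [hamVF]

theorem smulVF_smul : smulVF (c • J) P = c • smulVF J P := by
  simp [smulVF]

theorem divVF_hamVF : divVF (hamVF H) = 0 := by
  rw [divVF, hamVF, map_neg, pderiv_pderiv_comm 0 1, neg_add_cancel]

theorem wedgeVF_hamVF : wedgeVF P (hamVF H) = applyVF P H := by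
  simp only [wedgeVF, hamVF, applyVF]
  ring

theorem divVF_smulVF : divVF (smulVF J P) = applyVF P J + J * divVF P := by
  simp only [divVF, smulVF, applyVF, pderiv_mul]
  ring

theorem wedgeVF_smulVF_self : wedgeVF P (smulVF J P) = 0 := by
  simp only [wedgeVF, smulVF]
  ring

end VectorFields

section Euler

variable {γ1 γ2 : ℕ}

theorem divVF_eulerVF : divVF (eulerVF γ1 γ2) = C ((γ1 + γ2 : ℕ) : ℝ) := by
  simp [divVF, eulerVF, smul_eq_C_mul]

theorem applyVF_eulerVF {f : Poly} {n : ℕ} (hf : f.IsWeightedHomogeneous ![γ1, γ2] n) :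
    applyVF (eulerVF γ1 γ2) f = (n : ℝ) • f := by
  have := hf.sum_weight_X_mul_pderiv
  simp only [Fin.sum_univ_two, Matrix.cons_val_zero, Matrix.cons_val_one,
    ← Nat.cast_smul_eq_nsmul ℝ] at this
  simp only [applyVF, eulerVF, ← this, smul_mul_assoc]

end Euler

section Decomposition

variable {γ1 γ2 k : ℕ} {I J : Poly} {Q : Poly × Poly}

theorem divVF_hamVF_add_smulVF_eulerVF (hJ : J.IsWeightedHomogeneous ![γ1, γ2] k) :
    divVF (hamVF I + smulVF J (eulerVF γ1 γ2)) = ((k + (γ1 + γ2) : ℕ) : ℝ) • J := by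
  rw [divVF_add, divVF_hamVF, divVF_smulVF, applyVF_eulerVF hJ, divVF_eulerVF, mul_comm,
    ← smul_eq_C_mul, zero_add, ← add_smul, ← Nat.cast_add]

theorem wedgeVF_eulerVF_hamVF_add_smulVF {n : ℕ} (hI : I.IsWeightedHomogeneous ![γ1, γ2] n) :
    wedgeVF (eulerVF γ1 γ2) (hamVF I + smulVF J (eulerVF γ1 γ2)) = (n : ℝ) • I := by
  rw [wedgeVF_add, wedgeVF_hamVF, wedgeVF_smulVF_self, applyVF_eulerVF hI, add_zero]

theorem isWeightedHomogeneous_divVF (hQ1 : Q.1.IsWeightedHomogeneous ![γ1, γ2] (k + γ1))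
    (hQ2 : Q.2.IsWeightedHomogeneous ![γ1, γ2] (k + γ2)) :
    (divVF Q).IsWeightedHomogeneous ![γ1, γ2] k :=
  (hQ1.pderiv rfl).add (hQ2.pderiv rfl)

theorem isWeightedHomogeneous_wedgeVF_eulerVF
    (hQ1 : Q.1.IsWeightedHomogeneous ![γ1, γ2] (k + γ1))
    (hQ2 : Q.2.IsWeightedHomogeneous ![γ1, γ2] (k + γ2)) :
    (wedgeVF (eulerVF γ1 γ2) Q).IsWeightedHomogeneous ![γ1, γ2] (k + (γ1 + γ2)) := by
  have h0 : ![γ1, γ2] 0 + (k + γ2) = k + (γ1 + γ2) := by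
    simp only [Matrix.cons_val_zero]; ring
  have h1 : ![γ1, γ2] 1 + (k + γ1) = k + (γ1 + γ2) := by
    simp only [Matrix.cons_val_one, Matrix.cons_val_fin_one]; ring
  simp only [wedgeVF, eulerVF, smul_eq_C_mul, mul_assoc]
  exact (h0 ▸ ((isWeightedHomogeneous_X ℝ _ 0).mul hQ2).C_mul _).sub
    (h1 ▸ ((isWeightedHomogeneous_X ℝ _ 1).mul hQ1).C_mul _)

theorem hamVF_wedgeVF_add_smulVF_divVF
    (hQ1 : Q.1.IsWeightedHomogeneous ![γ1, γ2] (k + γ1))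
    (hQ2 : Q.2.IsWeightedHomogeneous ![γ1, γ2] (k + γ2)) :
    hamVF (wedgeVF (eulerVF γ1 γ2) Q) + smulVF (divVF Q) (eulerVF γ1 γ2)
      = ((k + (γ1 + γ2) : ℕ) : ℝ) • Q := by
  have e1 := applyVF_eulerVF hQ1
  have e2 := applyVF_eulerVF hQ2
  have h01 : (0 : Fin 2) ≠ 1 := by decide
  simp only [applyVF, eulerVF, smul_eq_C_mul, Nat.cast_add, map_add] at e1 e2
  ext1 <;>
  simp only [hamVF, wedgeVF, smulVF, divVF, eulerVF, Prod.fst_add, Prod.snd_add, Prod.smul_fst,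
    Prod.smul_snd, smul_eq_C_mul, Nat.cast_add, map_add, map_sub, pderiv_mul,
    pderiv_C, pderiv_X_self, pderiv_X_of_ne h01, pderiv_X_of_ne h01.symm]
  · linear_combination e1
  · linear_combination e2

end Decomposition

theorem euler_decomposition_general (γ1 γ2 : ℕ) (hγ1 : 0 < γ1) (k : ℕ)
    (Q : MvPolynomial (Fin 2) ℝ × MvPolynomial (Fin 2) ℝ)
    (hQ1 : Q.1.IsWeightedHomogeneous ![γ1, γ2] (k + γ1))
    (hQ2 : Q.2.IsWeightedHomogeneous ![γ1, γ2] (k + γ2)) :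
    (∃! IJ : MvPolynomial (Fin 2) ℝ × MvPolynomial (Fin 2) ℝ,
      IJ.1.IsWeightedHomogeneous ![γ1, γ2] (k + (γ1 + γ2)) ∧
      IJ.2.IsWeightedHomogeneous ![γ1, γ2] k ∧
      Q = hamVF IJ.1 + smulVF IJ.2 (eulerVF γ1 γ2)) ∧
    (∀ I J : MvPolynomial (Fin 2) ℝ,
      I.IsWeightedHomogeneous ![γ1, γ2] (k + (γ1 + γ2)) →
      J.IsWeightedHomogeneous ![γ1, γ2] k →
      Q = hamVF I + smulVF J (eulerVF γ1 γ2) →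
      ((k + (γ1 + γ2) : ℕ) : ℝ) • J = divVF Q) := by
  set c : ℝ := ((k + (γ1 + γ2) : ℕ) : ℝ)
  have hc : c ≠ 0 := Nat.cast_ne_zero.mpr (by omega)
  refine ⟨⟨(c⁻¹ • wedgeVF (eulerVF γ1 γ2) Q, c⁻¹ • divVF Q), ⟨?_, ?_, ?_⟩, ?_⟩, ?_⟩
  · simpa only [smul_eq_C_mul] using (isWeightedHomogeneous_wedgeVF_eulerVF hQ1 hQ2).C_mul c⁻¹
  · simpa only [smul_eq_C_mul] using (isWeightedHomogeneous_divVF hQ1 hQ2).C_mul c⁻¹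
  · rw [hamVF_smul, smulVF_smul, ← smul_add, hamVF_wedgeVF_add_smulVF_divVF hQ1 hQ2,
      inv_smul_smul₀ hc]
  · rintro ⟨I, J⟩ ⟨hI, hJ, rfl⟩
    rw [wedgeVF_eulerVF_hamVF_add_smulVF hI, divVF_hamVF_add_smulVF_eulerVF hJ,
      inv_smul_smul₀ hc, inv_smul_smul₀ hc]
  · rintro I J - hJ rfl
    exact (divVF_hamVF_add_smulVF_eulerVF hJ).symm

/-- **Lemma 1, Euler decomposition.** Every vector quasi-homogeneous polynomial
`Q = (Q1,Q2)` of generalized degree `k ≥ 0` can be written uniquely as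
`Q = (−∂I/∂x2, ∂I/∂x1) + J·E_γ` with `I` quasi-homogeneous of g.d. `k+δ` and `J`
quasi-homogeneous of g.d. `k`; moreover `(k+δ)·J = div Q`, i.e. `J = div(Q)/(k+δ)`. -/
theorem euler_decomposition (γ1 γ2 : ℕ) (hγ1 : 0 < γ1) (hγ2 : 0 < γ2)
    (hcop : Nat.Coprime γ1 γ2) (k : ℕ)
    (Q : MvPolynomial (Fin 2) ℝ × MvPolynomial (Fin 2) ℝ)
    (hQ1 : Q.1.IsWeightedHomogeneous ![γ1, γ2] (k + γ1))
    (hQ2 : Q.2.IsWeightedHomogeneous ![γ1, γ2] (k + γ2)) :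
    (∃! IJ : MvPolynomial (Fin 2) ℝ × MvPolynomial (Fin 2) ℝ,
      IJ.1.IsWeightedHomogeneous ![γ1, γ2] (k + (γ1 + γ2)) ∧
      IJ.2.IsWeightedHomogeneous ![γ1, γ2] k ∧
      Q = hamVF IJ.1 + smulVF IJ.2 (eulerVF γ1 γ2)) ∧
    (∀ I J : MvPolynomial (Fin 2) ℝ,
      I.IsWeightedHomogeneous ![γ1, γ2] (k + (γ1 + γ2)) →
      J.IsWeightedHomogeneous ![γ1, γ2] k →
      Q = hamVF I + smulVF J (eulerVF γ1 γ2) →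
      ((k + (γ1 + γ2) : ℕ) : ℝ) • J = divVF Q) :=
  euler_decomposition_general γ1 γ2 hγ1 k Q hQ1 hQ2
end

section
/- Let γ=(γ1,γ2) be a weight, δ=γ1+γ2, let H be a nonzero quasi-homogeneous polynomial of generalized degree χ+δ with χ≥1, and set 𝓗=(−∂H/∂x2, ∂H/∂x1). Given any quasi-homogeneous polynomial K of g.d. k+χ+δ (k≥0) such that 𝓗(K)=0, there exists a unique quasi-homogeneous polynomial J of g.d. k such that 𝓗(J)=0 and [𝓗, J·E_γ] = (−∂K/∂x2, ∂K/∂x1). -/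
open MvPolynomial

/-!
Euler's identity `E_γ(F) = (g.d. F)·F` turns `𝓗(K) = 0` into `d·H·∂ᵢK = e·K·∂ᵢH`, where `d` and `e`
are the generalized degrees of `H` and `K`. Writing `H = Pⁿ·U` and `K = Pᵐ·V` for a prime `P`, this
gives `P ∣ (d·m - e·n)·U·V·∂ᵢP` for both `i`; since a prime cannot divide both of its partial
derivatives, `d·m = e·n`, and `d ≤ e` forces `n ≤ m`. Hence `K = H·Q` with `Q` quasi-homogeneous of
degree `k` and `𝓗(Q) = 0`, and then `(−∂K/∂x2, ∂K/∂x1) = ((d + k)/d)·Q·𝓗`. On the other hand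
`[𝓗, J·E_γ] = −χ·J·𝓗` whenever `𝓗(J) = 0`, and `𝓗 ≠ 0`, so `J = −(d + k)/(χ·d)·Q` is the only
solution.
-/

namespace MvPolynomial

variable {σ R : Type*}

lemma mul_pderiv_pow_mul [CommSemiring R] (i : σ) (P U : MvPolynomial σ R) (n : ℕ) :
    P * pderiv i (P ^ n * U) = P ^ n * (n * pderiv i P * U + P * pderiv i U) := by
  rcases n with _ | n
  · simp
  · simp only [pderiv_mul, pderiv_pow, Nat.add_sub_cancel]
    push_cast
    ring

lemma IsWeightedHomogeneous.exists_eq_mul_of_dvd [CommSemiring R] {w : σ → ℕ}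
    {H K : MvPolynomial σ R} {d k : ℕ} (hH : H.IsWeightedHomogeneous w d)
    (hK : K.IsWeightedHomogeneous w (k + d)) (hHK : H ∣ K) :
    ∃ Q, Q.IsWeightedHomogeneous w k ∧ K = H * Q := by
  classical
  obtain ⟨Q, rfl⟩ := hHK
  refine ⟨weightedHomogeneousComponent w k Q,
    weightedHomogeneousComponent_isWeightedHomogeneous _ _, ?_⟩
  let := weightedGradedAlgebra R w
  have := DirectSum.coe_decompose_mul_of_left_mem_of_le (weightedHomogeneousSubmodule R w)
    (b := Q) hH (Nat.le_add_left d k)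
  rw [Nat.add_sub_cancel] at this
  simp only [DirectSum.decompose, Equiv.coe_fn_mk, weightedDecomposition.decompose'_apply] at this
  rw [← this, hK.weightedHomogeneousComponent_same]

lemma degreeOf_pderiv_lt [CommSemiring R] {i : σ} {p : MvPolynomial σ R}
    (h : pderiv i p ≠ 0) : degreeOf i (pderiv i p) < degreeOf i p := by
  have hlt : ∀ m ∈ (pderiv i p).support, m i < degreeOf i p := by
    intro m hm
    rw [mem_support_iff, coeff_pderiv] at hm
    have := monomial_le_degreeOf i (mem_support_iff.mpr (left_ne_zero_of_mul hm))
    simp only [Finsupp.add_apply, Finsupp.single_eq_same] at this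
    omega
  obtain ⟨m, hm⟩ := support_nonempty.mpr h
  exact (degreeOf_lt_iff ((Nat.zero_le _).trans_lt (hlt m hm))).mpr hlt

lemma pderiv_eq_zero_of_dvd [CommSemiring R] [NoZeroDivisors R] {i : σ} {p : MvPolynomial σ R}
    (h : p ∣ pderiv i p) : pderiv i p = 0 := by
  by_contra h0
  obtain ⟨q, hq⟩ := h
  have hp : p ≠ 0 := by rintro rfl; simp at h0
  have hq0 : q ≠ 0 := by rintro rfl; simp_all
  have := degreeOf_pderiv_lt h0
  rw [hq, degreeOf_mul_eq hp hq0] at this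
  omega

lemma eq_C_of_forall_pderiv_eq_zero [CommRing R] [IsDomain R] [CharZero R]
    {p : MvPolynomial σ R} (h : ∀ i, pderiv i p = 0) : p = C (coeff 0 p) := by
  classical
  ext m
  rw [coeff_C]
  split_ifs with hm
  · rw [hm]
  obtain ⟨i, hi⟩ : ∃ i, m i ≠ 0 := by
    by_contra! h'
    exact hm (Finsupp.ext h').symm
  have := coeff_pderiv (i := i) p (m - Finsupp.single i 1)
  rw [h i, coeff_zero, tsub_add_cancel_of_le
    (Finsupp.single_le_iff.mpr (Nat.one_le_iff_ne_zero.mpr hi))] at this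
  exact (mul_eq_zero.mp this.symm).resolve_right (Nat.cast_add_one_ne_zero _)

lemma _root_.Prime.exists_not_dvd_pderiv [Field R] [CharZero R] {P : MvPolynomial σ R}
    (hP : Prime P) : ∃ i, ¬ P ∣ pderiv i P := by
  by_contra! h
  rw [eq_C_of_forall_pderiv_eq_zero fun i => pderiv_eq_zero_of_dvd (h i)] at hP
  exact hP.not_isUnit ((Ne.isUnit fun h0 => hP.ne_zero (by rw [h0, map_zero])).map C)

variable [Field R] [CharZero R]

lemma mul_multiplicity_eq_of_forall_mul_pderiv_eq {H K P : MvPolynomial σ R} {d e : ℕ}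
    (hH : H ≠ 0) (hK : K ≠ 0) (hP : Prime P)
    (h : ∀ i, (d : MvPolynomial σ R) * H * pderiv i K = e * K * pderiv i H) :
    d * multiplicity P K = e * multiplicity P H := by
  obtain ⟨U, hHU, hPU⟩ := (FiniteMultiplicity.of_prime_left hP hH).exists_eq_pow_mul_and_not_dvd
  obtain ⟨V, hKV, hPV⟩ := (FiniteMultiplicity.of_prime_left hP hK).exists_eq_pow_mul_and_not_dvd
  set n := multiplicity P H
  set m := multiplicity P K
  by_contra hne
  have hunit : IsUnit ((d : MvPolynomial σ R) * m - e * n) := by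
    have hc : (d * m - e * n : R) ≠ 0 := sub_ne_zero.mpr (by exact_mod_cast hne)
    simpa using hc.isUnit.map C
  obtain ⟨i, hi⟩ := hP.exists_not_dvd_pderiv
  have key : ((d : MvPolynomial σ R) * m - e * n) * (U * (V * pderiv i P)) =
      P * (e * V * pderiv i U - d * U * pderiv i V) := by
    apply mul_left_cancel₀ (pow_ne_zero (n + m) hP.ne_zero)
    have hdK := h i
    rw [hHU, hKV] at hdK
    linear_combination (e * P ^ m * V) * mul_pderiv_pow_mul i P U n
      - (d * P ^ n * U) * mul_pderiv_pow_mul i P V m + P * hdK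
  have hdvd : P ∣ U * (V * pderiv i P) := (hunit.dvd_mul_left).mp (Dvd.intro _ key.symm)
  exact hi (((hP.dvd_or_dvd hdvd).resolve_left hPU |> hP.dvd_or_dvd).resolve_left hPV)

lemma dvd_of_forall_mul_pderiv_eq {H K : MvPolynomial σ R} {d e : ℕ} (hd : 0 < d) (hde : d ≤ e)
    (hH : H ≠ 0) (h : ∀ i, (d : MvPolynomial σ R) * H * pderiv i K = e * K * pderiv i H) :
    H ∣ K := by
  rcases eq_or_ne K 0 with rfl | hK
  · exact dvd_zero H
  refine (UniqueFactorizationMonoid.dvd_iff_emultiplicity_le hH).mpr fun P hP => ?_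
  rw [(FiniteMultiplicity.of_prime_left hP hH).emultiplicity_eq_multiplicity,
    (FiniteMultiplicity.of_prime_left hP hK).emultiplicity_eq_multiplicity, Nat.cast_le]
  have := mul_multiplicity_eq_of_forall_mul_pderiv_eq hH hK hP h
  nlinarith

end MvPolynomial

section PlanarVectorFields

variable {γ1 γ2 : ℕ}

lemma eulerVF_eq (γ1 γ2 : ℕ) :
    eulerVF γ1 γ2 =
      ((γ1 : MvPolynomial (Fin 2) ℝ) * X 0, (γ2 : MvPolynomial (Fin 2) ℝ) * X 1) := by
  simp only [eulerVF, smul_eq_C_mul, map_natCast]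

lemma applyVF_eulerVF_s6 {P : MvPolynomial (Fin 2) ℝ} {m : ℕ}
    (hP : P.IsWeightedHomogeneous ![γ1, γ2] m) : applyVF (eulerVF γ1 γ2) P = m * P := by
  have := hP.sum_weight_X_mul_pderiv
  simp only [Fin.sum_univ_two, nsmul_eq_mul, Matrix.cons_val_zero, Matrix.cons_val_one] at this
  rw [applyVF, eulerVF_eq]
  linear_combination this

lemma applyVF_mul (P : MvPolynomial (Fin 2) ℝ × MvPolynomial (Fin 2) ℝ)
    (f g : MvPolynomial (Fin 2) ℝ) : applyVF P (f * g) = f * applyVF P g + g * applyVF P f := by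
  simp only [applyVF, pderiv_mul]
  ring

lemma applyVF_hamVF_self (H : MvPolynomial (Fin 2) ℝ) : applyVF (hamVF H) H = 0 := by
  simp only [applyVF, hamVF]
  ring

lemma mul_pderiv_eq_of_applyVF_hamVF_eq_zero {H K : MvPolynomial (Fin 2) ℝ} {d e : ℕ}
    (hH : H.IsWeightedHomogeneous ![γ1, γ2] d) (hK : K.IsWeightedHomogeneous ![γ1, γ2] e)
    (hHK : applyVF (hamVF H) K = 0) (i : Fin 2) :
    (d : MvPolynomial (Fin 2) ℝ) * H * pderiv i K = e * K * pderiv i H := by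
  have eH := applyVF_eulerVF_s6 hH
  have eK := applyVF_eulerVF_s6 hK
  simp only [applyVF, hamVF, eulerVF_eq] at eH eK hHK
  match i with
  | 0 => linear_combination pderiv 0 H * eK - pderiv 0 K * eH - γ2 * X 1 * hHK
  | 1 => linear_combination pderiv 1 H * eK - pderiv 1 K * eH + γ1 * X 0 * hHK

lemma hamVF_ne_zero {H : MvPolynomial (Fin 2) ℝ} {d : ℕ}
    (hH : H.IsWeightedHomogeneous ![γ1, γ2] d) (hd : d ≠ 0) (hH0 : H ≠ 0) :
    hamVF H ≠ 0 := by
  intro h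
  have eH := applyVF_eulerVF_s6 hH
  simp only [hamVF, Prod.mk_eq_zero, neg_eq_zero] at h
  simp only [applyVF, h.1, h.2, mul_zero, add_zero] at eH
  exact mul_ne_zero (Nat.cast_ne_zero.mpr hd) hH0 eH.symm

lemma smulVF_left_injective {P : MvPolynomial (Fin 2) ℝ × MvPolynomial (Fin 2) ℝ}
    (hP : P ≠ 0) : Function.Injective fun J => smulVF J P := by
  intro J J' h
  simp only [smulVF, Prod.mk.injEq] at h
  by_cases h1 : P.1 = 0
  · exact mul_right_cancel₀ (fun h2 => hP (Prod.ext h1 h2)) h.2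
  · exact mul_right_cancel₀ h1 h.1

lemma hamVF_mul {H Q : MvPolynomial (Fin 2) ℝ} {d k : ℕ}
    (hH : H.IsWeightedHomogeneous ![γ1, γ2] d) (hQ : Q.IsWeightedHomogeneous ![γ1, γ2] k)
    (hHQ : applyVF (hamVF H) Q = 0) (hd : d ≠ 0) :
    hamVF (H * Q) = smulVF (C ((d + k) / d : ℝ) * Q) (hamVF H) := by
  have hd' : (d : MvPolynomial (Fin 2) ℝ) ≠ 0 := Nat.cast_ne_zero.mpr hd
  have hc : (C ((d + k) / d : ℝ) : MvPolynomial (Fin 2) ℝ) * d = d + k := by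
    rw [← map_natCast C, ← map_mul, div_mul_cancel₀ _ (Nat.cast_ne_zero.mpr hd)]
    simp
  have h := mul_pderiv_eq_of_applyVF_hamVF_eq_zero hH hQ hHQ
  simp only [hamVF, smulVF, pderiv_mul, Prod.mk.injEq]
  constructor <;> apply mul_left_cancel₀ hd'
  · linear_combination -h 1 + Q * pderiv 1 H * hc
  · linear_combination h 0 - Q * pderiv 0 H * hc

lemma lieVF_hamVF_smulVF_eulerVF {H J : MvPolynomial (Fin 2) ℝ} {χ : ℕ}
    (hH : H.IsWeightedHomogeneous ![γ1, γ2] (χ + (γ1 + γ2))) (hJ : applyVF (hamVF H) J = 0) :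
    lieVF (hamVF H) (smulVF J (eulerVF γ1 γ2)) = smulVF (-(χ * J)) (hamVF H) := by
  have e0 := applyVF_eulerVF_s6 (hH.pderiv (i := 0) (n' := χ + γ2) (by simp; ring))
  have e1 := applyVF_eulerVF_s6 (hH.pderiv (i := 1) (n' := χ + γ1) (by simp; ring))
  simp only [applyVF, hamVF, eulerVF_eq] at e0 e1 hJ
  simp only [lieVF, applyVF, hamVF, smulVF, eulerVF_eq, pderiv_mul, pderiv_X_self,
    Derivation.map_natCast, pderiv_X_of_ne (show (1 : Fin 2) ≠ 0 by decide),
    pderiv_X_of_ne (show (0 : Fin 2) ≠ 1 by decide), map_neg, Prod.mk.injEq]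
  push_cast at e0 e1
  constructor
  · linear_combination J * e1 + γ1 * X 0 * hJ
  · linear_combination -J * e0 + γ2 * X 1 * hJ

end PlanarVectorFields

theorem exists_unique_integral_smul_euler_general (γ1 γ2 : ℕ)
    (χ k : ℕ) (hχ : 1 ≤ χ)
    (H : MvPolynomial (Fin 2) ℝ) (hH0 : H ≠ 0)
    (hH : H.IsWeightedHomogeneous ![γ1, γ2] (χ + (γ1 + γ2)))
    (K : MvPolynomial (Fin 2) ℝ)
    (hK : K.IsWeightedHomogeneous ![γ1, γ2] (k + χ + (γ1 + γ2)))
    (hKint : applyVF (hamVF H) K = 0) :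
    ∃! J : MvPolynomial (Fin 2) ℝ,
      J.IsWeightedHomogeneous ![γ1, γ2] k ∧
      applyVF (hamVF H) J = 0 ∧
      lieVF (hamVF H) (smulVF J (eulerVF γ1 γ2)) = hamVF K := by
  obtain ⟨Q, hQ, rfl⟩ := hH.exists_eq_mul_of_dvd (by rwa [add_assoc] at hK) <|
    dvd_of_forall_mul_pderiv_eq (by omega) (by omega) hH0
      (mul_pderiv_eq_of_applyVF_hamVF_eq_zero hH hK hKint)
  have hHQ : applyVF (hamVF H) Q = 0 := by
    rwa [applyVF_mul, applyVF_hamVF_self, mul_zero, add_zero, mul_eq_zero, or_iff_right hH0]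
      at hKint
  set c : ℝ := ((χ + (γ1 + γ2) : ℕ) + k) / (χ + (γ1 + γ2) : ℕ)
  set J₀ := C (-(c / χ)) * Q
  have hJ₀ : -((χ : MvPolynomial (Fin 2) ℝ) * J₀) = C c * Q := by
    rw [← map_natCast C, ← mul_assoc, ← map_mul, ← neg_mul, ← map_neg]
    congr 2
    field_simp
  have hlie : ∀ J, applyVF (hamVF H) J = 0 →
      (lieVF (hamVF H) (smulVF J (eulerVF γ1 γ2)) = hamVF (H * Q) ↔ J = J₀) := by
    intro J hJ
    rw [lieVF_hamVF_smulVF_eulerVF hH hJ, hamVF_mul hH hQ hHQ (by omega), ← hJ₀,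
      (smulVF_left_injective (hamVF_ne_zero hH (by omega) hH0)).eq_iff, neg_inj]
    exact mul_right_inj' (Nat.cast_ne_zero.mpr (by omega))
  have hJ₀int : applyVF (hamVF H) J₀ = 0 := by
    rw [applyVF_mul, hHQ, applyVF, pderiv_C, pderiv_C]; ring
  refine ⟨J₀, ⟨?_, hJ₀int, (hlie J₀ hJ₀int).mpr rfl⟩,
    fun J ⟨_, hJ, hJlie⟩ => (hlie J hJ).mp hJlie⟩
  simpa only [zero_add] using (isWeightedHomogeneous_C ![γ1, γ2] (-(c / χ))).mul hQ

/-- **Lemma 2, part 2.** Let `γ=(γ1,γ2)` be a weight, `δ=γ1+γ2`, `H ≠ 0` a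
quasi-homogeneous polynomial of g.d. `χ+δ` with `χ ≥ 1`, and `𝓗 = (−∂H/∂x2, ∂H/∂x1)`.
Given any quasi-homogeneous polynomial `K` of g.d. `k+χ+δ` (`k ≥ 0`) with `𝓗(K) = 0`, there
exists a unique quasi-homogeneous polynomial `J` of g.d. `k` such that `𝓗(J) = 0` and
`[𝓗, J·E_γ] = (−∂K/∂x2, ∂K/∂x1)`. -/
theorem exists_unique_integral_smul_euler (γ1 γ2 : ℕ) (hγ1 : 0 < γ1) (hγ2 : 0 < γ2)
    (hcop : Nat.Coprime γ1 γ2) (χ k : ℕ) (hχ : 1 ≤ χ)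
    (H : MvPolynomial (Fin 2) ℝ) (hH0 : H ≠ 0)
    (hH : H.IsWeightedHomogeneous ![γ1, γ2] (χ + (γ1 + γ2)))
    (K : MvPolynomial (Fin 2) ℝ)
    (hK : K.IsWeightedHomogeneous ![γ1, γ2] (k + χ + (γ1 + γ2)))
    (hKint : applyVF (hamVF H) K = 0) :
    ∃! J : MvPolynomial (Fin 2) ℝ,
      J.IsWeightedHomogeneous ![γ1, γ2] k ∧
      applyVF (hamVF H) J = 0 ∧
      lieVF (hamVF H) (smulVF J (eulerVF γ1 γ2)) = hamVF K :=
  exists_unique_integral_smul_euler_general γ1 γ2 χ k hχ H hH0 hH K hK hKint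
end

section
/- Let l ≥ m ≥ 2 be integers, d = gcd(l,m), and consider the vector field 𝓗 = (±x2^{m−1}, x1^{l−1}) with Hamiltonian H = x1^l/l ∓ x2^m/m, which is quasi-homogeneous with respect to the weight γ=(m/d, l/d). Then every quasi-homogeneous polynomial P (with respect to γ) that is a polynomial integral of 𝓗, i.e. ±x2^{m−1}·∂P/∂x1 + x1^{l−1}·∂P/∂x2 = 0, is a scalar multiple of a power of H: P = c·H^r for some constant c and integer r ≥ 0. -/
/-!
Write `p i j` for the coefficient of `X 0 ^ i * X 1 ^ j`. Comparing coefficients in `𝓗 P = 0`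
gives the recurrence `ε (i + l) p (i + l) j + (j + m) p i (j + m) = 0`, together with
`p i j = 0` whenever `0 < i < l` or `0 < j < m`. Hence an integral is determined by its
coefficients `p 0 j`, and these vanish unless `m ∣ j`. If `P` is quasi-homogeneous, at most one
of them, `p 0 (m r)`, is nonzero. `H ^ r` is a quasi-homogeneous integral of the same degree
whose coefficient of `X 1 ^ (m r)` is `(-ε/m) ^ r ≠ 0`, so subtracting the matching multiple of
`H ^ r` from `P` leaves an integral without pure `X 1`-terms, which is zero.
-/

open MvPolynomial Finsupp

theorem MvPolynomial.coeff_X_pow_mul' {σ R : Type*} [CommSemiring R] (e : σ →₀ ℕ) (k : σ)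
    (n : ℕ) (p : MvPolynomial σ R) :
    coeff e (X k ^ n * p) = if n ≤ e k then coeff (e - single k n) p else 0 := by
  simp_rw [X_pow_eq_monomial, coeff_monomial_mul', single_le_iff, one_mul]

noncomputable def expPair (i j : ℕ) : Fin 2 →₀ ℕ := single 0 i + single 1 j

@[simp] theorem expPair_apply_zero (i j : ℕ) : expPair i j 0 = i := by simp [expPair]

@[simp] theorem expPair_apply_one (i j : ℕ) : expPair i j 1 = j := by simp [expPair]

theorem eq_expPair (e : Fin 2 →₀ ℕ) : e = expPair (e 0) (e 1) := by
  simp [Finsupp.ext_iff, Fin.forall_fin_two]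

@[simp] theorem expPair_add_single_zero (i j n : ℕ) :
    expPair i j + single 0 n = expPair (i + n) j := by
  simp [Finsupp.ext_iff, Fin.forall_fin_two]

@[simp] theorem expPair_add_single_one (i j n : ℕ) :
    expPair i j + single 1 n = expPair i (j + n) := by
  simp [Finsupp.ext_iff, Fin.forall_fin_two]

@[simp] theorem expPair_sub_single_zero (i j n : ℕ) :
    expPair i j - single 0 n = expPair (i - n) j := by
  simp [Finsupp.ext_iff, Fin.forall_fin_two]

@[simp] theorem expPair_sub_single_one (i j n : ℕ) :
    expPair i j - single 1 n = expPair i (j - n) := by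
  simp [Finsupp.ext_iff, Fin.forall_fin_two]

theorem weight_expPair (w : Fin 2 → ℕ) (i j : ℕ) :
    weight w (expPair i j) = i * w 0 + j * w 1 := by
  simp [expPair, weight_single]

section

variable {K : Type*} [Field K]

noncomputable def hamDerivation (l m : ℕ) (ε : K) :
    Derivation K (MvPolynomial (Fin 2) K) (MvPolynomial (Fin 2) K) :=
  (ε • X 1 ^ (m - 1) : MvPolynomial (Fin 2) K) • pderiv 0 +
    (X 0 ^ (l - 1) : MvPolynomial (Fin 2) K) • pderiv 1

theorem hamDerivation_apply (l m : ℕ) (ε : K) (Q : MvPolynomial (Fin 2) K) :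
    hamDerivation l m ε Q = ε • (X 1 ^ (m - 1) * pderiv 0 Q) + X 0 ^ (l - 1) * pderiv 1 Q := by
  simp [hamDerivation]

theorem coeff_expPair_hamDerivation (l m : ℕ) (ε : K) (Q : MvPolynomial (Fin 2) K) (i j : ℕ) :
    coeff (expPair i j) (hamDerivation l m ε Q) =
      ε * (if m - 1 ≤ j then (i + 1) * coeff (expPair (i + 1) (j - (m - 1))) Q else 0) +
        if l - 1 ≤ i then (j + 1) * coeff (expPair (i - (l - 1)) (j + 1)) Q else 0 := by
  simp only [hamDerivation_apply, coeff_add, coeff_smul, coeff_X_pow_mul', coeff_pderiv,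
    expPair_apply_zero, expPair_apply_one, expPair_sub_single_zero, expPair_sub_single_one,
    expPair_add_single_zero, expPair_add_single_one, smul_eq_mul, mul_comm]

section Integral

variable {l m : ℕ} {ε : K} {Q : MvPolynomial (Fin 2) K}

theorem coeff_recurrence_of_hamDerivation_eq_zero (hl : 1 ≤ l) (hm : 1 ≤ m)
    (hQ : hamDerivation l m ε Q = 0) (i j : ℕ) :
    ε * (i + l) * coeff (expPair (i + l) j) Q + (j + m) * coeff (expPair i (j + m)) Q = 0 := by
  obtain ⟨l, rfl⟩ := Nat.exists_eq_add_of_le' hl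
  obtain ⟨m, rfl⟩ := Nat.exists_eq_add_of_le' hm
  have h := congrArg (coeff (expPair (i + l) (j + m))) hQ
  rw [coeff_expPair_hamDerivation, if_pos (by omega), if_pos (by omega), coeff_zero] at h
  simp only [Nat.add_sub_cancel] at h
  push_cast at h ⊢
  linear_combination h

theorem coeff_eq_zero_of_hamDerivation_eq_zero_of_lt_left [CharZero K] (hε : ε ≠ 0)
    (hQ : hamDerivation l m ε Q = 0) {i : ℕ} (hi : 0 < i) (hil : i < l) (j : ℕ) :
    coeff (expPair i j) Q = 0 := by
  obtain ⟨i, rfl⟩ := Nat.exists_eq_add_of_le' hi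
  have h := congrArg (coeff (expPair i (j + (m - 1)))) hQ
  rw [coeff_expPair_hamDerivation, if_pos (by omega), if_neg (by omega), coeff_zero,
    Nat.add_sub_cancel, add_zero] at h
  simpa [hε, Nat.cast_add_one_ne_zero] using h

theorem coeff_eq_zero_of_hamDerivation_eq_zero_of_lt_right [CharZero K]
    (hQ : hamDerivation l m ε Q = 0) (i : ℕ) {j : ℕ} (hj : 0 < j) (hjm : j < m) :
    coeff (expPair i j) Q = 0 := by
  obtain ⟨j, rfl⟩ := Nat.exists_eq_add_of_le' hj
  have h := congrArg (coeff (expPair (i + (l - 1)) j)) hQ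
  rw [coeff_expPair_hamDerivation, if_neg (by omega), if_pos (by omega), coeff_zero,
    Nat.add_sub_cancel, mul_zero, zero_add] at h
  simpa [Nat.cast_add_one_ne_zero] using h

theorem coeff_eq_zero_of_hamDerivation_eq_zero_of_not_dvd [CharZero K] (hl : 1 ≤ l)
    (hm : 1 ≤ m) (hQ : hamDerivation l m ε Q = 0) {j : ℕ} (hj : ¬ m ∣ j) (i : ℕ) :
    coeff (expPair i j) Q = 0 := by
  induction j using Nat.strong_induction_on generalizing i with
  | _ j ih =>
    rcases lt_or_ge j m with hjm | hjm
    · exact coeff_eq_zero_of_hamDerivation_eq_zero_of_lt_right hQ i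
        (Nat.pos_of_ne_zero fun h ↦ hj (h ▸ dvd_zero m)) hjm
    obtain ⟨j, rfl⟩ := Nat.exists_eq_add_of_le' hjm
    have h := coeff_recurrence_of_hamDerivation_eq_zero hl hm hQ i j
    rw [ih j (by omega) (fun h ↦ hj (h.add dvd_rfl)) (i + l), mul_zero, zero_add] at h
    exact (mul_eq_zero.1 h).resolve_left (by exact_mod_cast (by omega : j + m ≠ 0))

theorem eq_zero_of_hamDerivation_eq_zero_of_forall_coeff_expPair_zero [CharZero K]
    (hε : ε ≠ 0) (hl : 1 ≤ l) (hm : 1 ≤ m) (hQ : hamDerivation l m ε Q = 0)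
    (h0 : ∀ j, coeff (expPair 0 j) Q = 0) : Q = 0 := by
  suffices h : ∀ i j, coeff (expPair i j) Q = 0 by
    ext e
    rw [eq_expPair e, h, coeff_zero]
  intro i
  induction i using Nat.strong_induction_on with
  | _ i ih =>
    intro j
    rcases Nat.eq_zero_or_pos i with rfl | hi
    · exact h0 j
    rcases lt_or_ge i l with hil | hil
    · exact coeff_eq_zero_of_hamDerivation_eq_zero_of_lt_left hε hQ hi hil j
    obtain ⟨i, rfl⟩ := Nat.exists_eq_add_of_le' hil
    have h := coeff_recurrence_of_hamDerivation_eq_zero hl hm hQ i j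
    rw [ih i (by omega) (j + m), mul_zero, add_zero] at h
    exact (mul_eq_zero.1 h).resolve_left
      (mul_ne_zero hε (by exact_mod_cast (by omega : i + l ≠ 0)))

theorem eq_zero_of_hamDerivation_eq_zero_of_isWeightedHomogeneous [CharZero K] (hε : ε ≠ 0)
    (hl : 1 ≤ l) (hm : 1 ≤ m) (hQ : hamDerivation l m ε Q = 0) {w : Fin 2 → ℕ} (hw : 0 < w 1)
    {j : ℕ} (hQw : Q.IsWeightedHomogeneous w (j * w 1)) (hj : coeff (expPair 0 j) Q = 0) :
    Q = 0 := by
  refine eq_zero_of_hamDerivation_eq_zero_of_forall_coeff_expPair_zero hε hl hm hQ fun j' ↦ ?_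
  by_contra h
  have hweight := hQw h
  rw [weight_expPair, zero_mul, zero_add] at hweight
  exact h (Nat.eq_of_mul_eq_mul_right hw hweight ▸ hj)

end Integral

noncomputable def ham (l m : ℕ) (ε : K) : MvPolynomial (Fin 2) K :=
  (l : K)⁻¹ • X 0 ^ l - (ε * (m : K)⁻¹) • X 1 ^ m

theorem hamDerivation_ham [CharZero K] {l m : ℕ} (hl : 1 ≤ l) (hm : 1 ≤ m) (ε : K) :
    hamDerivation l m ε (ham l m ε) = 0 := by
  have hl_inv : (C (l : K)⁻¹ * C (l : K) : MvPolynomial (Fin 2) K) = 1 := by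
    rw [← C_mul, inv_mul_cancel₀ (by exact_mod_cast (by omega : l ≠ 0)), C_1]
  have hm_inv : (C (m : K)⁻¹ * C (m : K) : MvPolynomial (Fin 2) K) = 1 := by
    rw [← C_mul, inv_mul_cancel₀ (by exact_mod_cast (by omega : m ≠ 0)), C_1]
  simp only [hamDerivation_apply, ham, map_sub, Derivation.map_smul, pderiv_pow, pderiv_X_self,
    pderiv_X_of_ne zero_ne_one, pderiv_X_of_ne one_ne_zero, mul_zero, mul_one, smul_zero]
  simp only [smul_eq_C_mul, ← map_natCast (C : K →+* MvPolynomial (Fin 2) K), C_mul]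
  linear_combination (C ε * X 1 ^ (m - 1) * X 0 ^ (l - 1)) * (hl_inv - hm_inv)

theorem hamDerivation_ham_pow [CharZero K] {l m : ℕ} (hl : 1 ≤ l) (hm : 1 ≤ m) (ε : K)
    (r : ℕ) : hamDerivation l m ε (ham l m ε ^ r) = 0 := by
  simp [Derivation.leibniz_pow, hamDerivation_ham hl hm]

theorem coeff_expPair_zero_ham_pow {l : ℕ} (hl : 1 ≤ l) (m : ℕ) (ε : K) (r : ℕ) :
    coeff (expPair 0 (m * r)) (ham l m ε ^ r) = (-(ε * (m : K)⁻¹)) ^ r := by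
  induction r with
  | zero => simp [expPair]
  | succ r ih =>
    rw [pow_succ']
    change coeff _ (((l : K)⁻¹ • X 0 ^ l - (ε * (m : K)⁻¹) • X 1 ^ m) * ham l m ε ^ r) = _
    rw [sub_mul, coeff_sub, smul_mul_assoc, smul_mul_assoc, coeff_smul, coeff_smul,
      coeff_X_pow_mul', coeff_X_pow_mul', if_neg (by simp; omega), if_pos (by simp; nlinarith),
      expPair_sub_single_one, Nat.mul_succ, Nat.add_sub_cancel, ih, smul_zero, zero_sub,
      smul_eq_mul, pow_succ']
    ring

theorem isWeightedHomogeneous_ham {l m : ℕ} (ε : K) {w : Fin 2 → ℕ} {n : ℕ}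
    (h0 : l * w 0 = n) (h1 : m * w 1 = n) : (ham l m ε).IsWeightedHomogeneous w n := by
  have hX0 := (isWeightedHomogeneous_X K w 0).pow l
  have hX1 := (isWeightedHomogeneous_X K w 1).pow m
  rw [smul_eq_mul, h0] at hX0
  rw [smul_eq_mul, h1] at hX1
  simp only [ham, smul_eq_C_mul]
  exact (hX0.C_mul _).sub (hX1.C_mul _)

theorem exists_eq_smul_ham_pow [CharZero K] {l m : ℕ} {ε : K} {P : MvPolynomial (Fin 2) K}
    (hε : ε ≠ 0) (hl : 1 ≤ l) (hm : 1 ≤ m) (hP : hamDerivation l m ε P = 0) {w : Fin 2 → ℕ}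
    (hw : l * w 0 = m * w 1) (hw1 : 0 < w 1) {k : ℕ} (hPw : P.IsWeightedHomogeneous w k) :
    ∃ (c : K) (r : ℕ), P = c • ham l m ε ^ r := by
  by_cases h0 : ∀ j, coeff (expPair 0 j) P = 0
  · refine ⟨0, 0, ?_⟩
    rw [eq_zero_of_hamDerivation_eq_zero_of_forall_coeff_expPair_zero hε hl hm hP h0, zero_smul]
  push Not at h0
  obtain ⟨j, hj⟩ := h0
  obtain ⟨r, rfl⟩ : m ∣ j :=
    not_not.1 fun h ↦ hj (coeff_eq_zero_of_hamDerivation_eq_zero_of_not_dvd hl hm hP h 0)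
  have hk : k = m * r * w 1 := by simpa [weight_expPair] using (hPw hj).symm
  set c := coeff (expPair 0 (m * r)) P / (-(ε * (m : K)⁻¹)) ^ r
  refine ⟨c, r, sub_eq_zero.1 ?_⟩
  refine eq_zero_of_hamDerivation_eq_zero_of_isWeightedHomogeneous (j := m * r) hε hl hm
    ?_ hw1 ?_ ?_
  · rw [map_sub, Derivation.map_smul, hP, hamDerivation_ham_pow hl hm, smul_zero, sub_zero]
  · have hHr := ((isWeightedHomogeneous_ham ε hw rfl).pow r).C_mul c
    rw [smul_eq_mul, ← mul_assoc, mul_comm r m, ← hk, ← smul_eq_C_mul] at hHr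
    exact hk ▸ hPw.sub hHr
  · have hε' : -(ε * (m : K)⁻¹) ≠ 0 := by simp [hε]; omega
    rw [coeff_sub, coeff_smul, coeff_expPair_zero_ham_pow hl, smul_eq_mul,
      div_mul_cancel₀ _ (pow_ne_zero _ hε'), sub_self]

end

/-- Let `l ≥ m ≥ 2`, `d = gcd(l,m)`, and consider the vector field
`𝓗 = (±x2^{m−1}, x1^{l−1})` with Hamiltonian `H = x1^l/l ∓ x2^m/m`, quasi-homogeneous for
the weight `γ = (m/d, l/d)`. Every quasi-homogeneous polynomial integral `P` of `𝓗`
(i.e. `±x2^{m−1}·∂P/∂x1 + x1^{l−1}·∂P/∂x2 = 0`) is a scalar multiple of a power of `H`. -/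
theorem qhp_integral_eq_pow_ham (l m : ℕ) (hm : 2 ≤ m) (hlm : m ≤ l) (ε : ℝ)
    (hε : ε = 1 ∨ ε = -1) (k : ℕ) (P : MvPolynomial (Fin 2) ℝ)
    (hP : P.IsWeightedHomogeneous ![m / Nat.gcd l m, l / Nat.gcd l m] k)
    (hint : ε • (X 1 ^ (m - 1) * pderiv 0 P) + X 0 ^ (l - 1) * pderiv 1 P = 0) :
    ∃ (c : ℝ) (r : ℕ),
      P = c • (((l : ℝ)⁻¹ • X 0 ^ l : MvPolynomial (Fin 2) ℝ) -
        (ε * (m : ℝ)⁻¹) • X 1 ^ m) ^ r := by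
  have hε0 : ε ≠ 0 := by rcases hε with rfl | rfl <;> norm_num
  have hw : l * (m / Nat.gcd l m) = m * (l / Nat.gcd l m) := by
    rw [← Nat.mul_div_assoc _ (Nat.gcd_dvd_right l m),
      ← Nat.mul_div_assoc _ (Nat.gcd_dvd_left l m), mul_comm]
  have hw1 : 0 < l / Nat.gcd l m :=
    Nat.div_pos (Nat.gcd_le_left m (by omega)) (Nat.gcd_pos_of_pos_left m (by omega))
  exact exists_eq_smul_ham_pow hε0 (by omega) (by omega)
    ((hamDerivation_apply l m ε P).trans hint) hw hw1 hP
end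

section
/- Let l ≥ m ≥ 2 be integers and R = Σ_{p1,p2≥0} R^{(p1,p2)} x1^{p1} x2^{p2} a polynomial in two variables. Then x2·∂^{l−1}R/∂x1^{l−1} ± x1·∂^{m−1}R/∂x2^{m−1} = 0 holds if and only if for all i,j ≥ 0: R^{(i,m−1)} = 0, R^{(l−1,j)} = 0, and (l−1)!·C(i+l, l−1)·R^{(i+l, j)} ± (m−1)!·C(j+m, m−1)·R^{(i, j+m)} = 0, where C(n,k) denotes the binomial coefficient. Consequently, R^{(i, km−1)} = 0 and R^{(kl−1, j)} = 0 for all k ≥ 1 and all i,j ≥ 0. -/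
/-!
`X 1 * ∂₀^{l-1}` moves the exponent `(a, b)` to `(a + l - 1, b - 1)` and `X 0 * ∂₁^{m-1}` moves
it to `(a - 1, b + m - 1)`, so each coefficient of the image of `R` involves at most two
coefficients of `R`, weighted by the falling factorials `(l-1)! C(·, l-1)` and `(m-1)! C(·, m-1)`.
On the axes `a = 0` or `b = 0` only one of them survives: this kills the row `R^{(l-1, ·)}` and the
column `R^{(·, m-1)}`, and the remaining equations carry the vanishing from row `kl - 1` to row
`(k+1)l - 1` and from column `km - 1` to column `(k+1)m - 1`.
-/

open MvPolynomial Finsupp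
open scoped Nat

namespace MvPolynomial

variable {σ S : Type*} [CommSemiring S]

theorem coeff_pderiv_pow (i : σ) (n : ℕ) (p : MvPolynomial σ S) (d : σ →₀ ℕ) :
    coeff d (((pderiv i).toLinearMap ^ n) p) =
      (d i + n).descFactorial n * coeff (d + single i n) p := by
  rw [Module.End.pow_apply]
  induction n generalizing p with
  | zero => simp
  | succ n ih =>
    rw [Function.iterate_succ_apply, ih, Derivation.coeFn_coe, coeff_pderiv, add_assoc,
      ← single_add, ← add_assoc, Nat.succ_descFactorial_succ]
    simp only [Finsupp.coe_add, Pi.add_apply, single_eq_same, Nat.cast_mul, Nat.cast_add,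
      Nat.cast_one]
    ring

theorem coeff_X_mul_of_apply_eq_zero (j : σ) (p : MvPolynomial σ S) {d : σ →₀ ℕ}
    (hd : d j = 0) : coeff d (X j * p) = 0 := by
  classical
  rw [coeff_X_mul', if_neg (by simpa using hd)]

end MvPolynomial

section TwoVariables

variable {S : Type*}

theorem Finsupp.eq_single_zero_add_single_one (d : Fin 2 →₀ ℕ) :
    d = single 0 (d 0) + single 1 (d 1) := by
  ext j; fin_cases j <;> simp

theorem MvPolynomial.eq_zero_iff_coeff_succ [CommSemiring S] {p : MvPolynomial (Fin 2) S}
    (h₀ : coeff 0 p = 0) :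
    p = 0 ↔ (∀ i, coeff (single 0 (i + 1) + single 1 0) p = 0) ∧
      (∀ j, coeff (single 0 0 + single 1 (j + 1)) p = 0) ∧
      ∀ i j, coeff (single 0 (i + 1) + single 1 (j + 1)) p = 0 := by
  refine ⟨by rintro rfl; simp, fun ⟨hi, hj, hij⟩ ↦ eq_zero_iff.mpr fun d ↦ ?_⟩
  rw [eq_single_zero_add_single_one d]
  rcases d 0 with _ | i <;> rcases d 1 with _ | j
  · simpa using h₀
  exacts [hj j, hi i, hij i j]

/-- The adjoint of the Hamiltonian derivation of `x₁^{n₁+1}/(n₁+1) - ε x₂^{n₂+1}/(n₂+1)`;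
in the paper's notation `n₁ = l - 1`, `n₂ = m - 1` and `ε = ±1`. -/
noncomputable def hamiltonianAdjoint [CommSemiring S] (n₁ n₂ : ℕ) (ε : S)
    (R : MvPolynomial (Fin 2) S) : MvPolynomial (Fin 2) S :=
  X 1 * ((pderiv (0 : Fin 2)).toLinearMap ^ n₁) R +
    ε • (X 0 * ((pderiv (1 : Fin 2)).toLinearMap ^ n₂) R)

section Coefficients

variable [CommSemiring S] (n₁ n₂ : ℕ) (ε : S) (R : MvPolynomial (Fin 2) S)

theorem coeff_X_one_mul_pderiv_zero_pow (a b : ℕ) :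
    coeff (single 0 a + single 1 (b + 1)) (X 1 * ((pderiv (0 : Fin 2)).toLinearMap ^ n₁) R) =
      (a + n₁).descFactorial n₁ * coeff (single 0 (a + n₁) + single 1 b) R := by
  rw [show single (0 : Fin 2) a + single 1 (b + 1) = single 1 1 + (single 0 a + single 1 b) by
      rw [single_add]; abel,
    coeff_X_mul, coeff_pderiv_pow, show single (0 : Fin 2) a + single 1 b + single 0 n₁ =
      single 0 (a + n₁) + single 1 b by rw [single_add]; abel]
  simp

theorem coeff_X_zero_mul_pderiv_one_pow (a b : ℕ) :
    coeff (single 0 (a + 1) + single 1 b) (X 0 * ((pderiv (1 : Fin 2)).toLinearMap ^ n₂) R) =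
      (b + n₂).descFactorial n₂ * coeff (single 0 a + single 1 (b + n₂)) R := by
  rw [show single (0 : Fin 2) (a + 1) + single 1 b = single 0 1 + (single 0 a + single 1 b) by
      rw [single_add]; abel,
    coeff_X_mul, coeff_pderiv_pow, show single (0 : Fin 2) a + single 1 b + single 1 n₂ =
      single 0 a + single 1 (b + n₂) by rw [single_add]; abel]
  simp

theorem coeff_zero_hamiltonianAdjoint : coeff 0 (hamiltonianAdjoint n₁ n₂ ε R) = 0 := by
  simp [hamiltonianAdjoint, coeff_X_mul_of_apply_eq_zero]

theorem coeff_hamiltonianAdjoint_succ_zero (i : ℕ) :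
    coeff (single 0 (i + 1) + single 1 0) (hamiltonianAdjoint n₁ n₂ ε R) =
      ε * (n₂ ! * coeff (single 0 i + single 1 n₂) R) := by
  rw [hamiltonianAdjoint, coeff_add, coeff_X_mul_of_apply_eq_zero _ _ (by simp), coeff_smul,
    coeff_X_zero_mul_pderiv_one_pow, zero_add, zero_add, Nat.descFactorial_self, smul_eq_mul]

theorem coeff_hamiltonianAdjoint_zero_succ (j : ℕ) :
    coeff (single 0 0 + single 1 (j + 1)) (hamiltonianAdjoint n₁ n₂ ε R) =
      n₁ ! * coeff (single 0 n₁ + single 1 j) R := by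
  rw [hamiltonianAdjoint, coeff_add, coeff_smul, coeff_X_mul_of_apply_eq_zero 0 _ (by simp),
    coeff_X_one_mul_pderiv_zero_pow, zero_add, Nat.descFactorial_self, smul_zero, add_zero]

theorem coeff_hamiltonianAdjoint_succ_succ (i j : ℕ) :
    coeff (single 0 (i + 1) + single 1 (j + 1)) (hamiltonianAdjoint n₁ n₂ ε R) =
      (n₁ ! * (i + (n₁ + 1)).choose n₁ : ℕ) * coeff (single 0 (i + (n₁ + 1)) + single 1 j) R +
        ε * ((n₂ ! * (j + (n₂ + 1)).choose n₂ : ℕ) *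
          coeff (single 0 i + single 1 (j + (n₂ + 1))) R) := by
  rw [hamiltonianAdjoint, coeff_add, coeff_smul, coeff_X_one_mul_pderiv_zero_pow,
    coeff_X_zero_mul_pderiv_one_pow, smul_eq_mul, ← Nat.descFactorial_eq_factorial_mul_choose,
    ← Nat.descFactorial_eq_factorial_mul_choose, add_assoc i, add_comm 1 n₁, add_assoc j,
    add_comm 1 n₂]

end Coefficients

variable [CommRing S] [NoZeroDivisors S] [CharZero S] {n₁ n₂ : ℕ} {ε : S}
  {R : MvPolynomial (Fin 2) S}

theorem factorial_mul_choose_ne_zero {n k : ℕ} (h : k ≤ n) :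
    (k ! : S) * (n.choose k : S) ≠ 0 :=
  mul_ne_zero (Nat.cast_ne_zero.mpr (Nat.factorial_ne_zero k))
    (Nat.cast_ne_zero.mpr (Nat.choose_pos h).ne')

theorem hamiltonianAdjoint_eq_zero_iff (hε : ε ≠ 0) :
    hamiltonianAdjoint n₁ n₂ ε R = 0 ↔
      (∀ i, R.coeff (single 0 i + single 1 n₂) = 0) ∧
      (∀ j, R.coeff (single 0 n₁ + single 1 j) = 0) ∧
      ∀ i j, ((n₁ ! : S) * ((i + (n₁ + 1)).choose n₁ : S)) *
            R.coeff (single 0 (i + (n₁ + 1)) + single 1 j)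
          + ε * (((n₂ ! : S) * ((j + (n₂ + 1)).choose n₂ : S)) *
            R.coeff (single 0 i + single 1 (j + (n₂ + 1)))) = 0 := by
  simp only [eq_zero_iff_coeff_succ (coeff_zero_hamiltonianAdjoint n₁ n₂ ε R),
    coeff_hamiltonianAdjoint_succ_zero, coeff_hamiltonianAdjoint_zero_succ,
    coeff_hamiltonianAdjoint_succ_succ, mul_eq_zero, hε, Nat.cast_mul, Nat.cast_eq_zero,
    Nat.factorial_ne_zero, false_or]

theorem coeff_column_eq_zero_of_hamiltonianAdjoint_eq_zero (hε : ε ≠ 0)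
    (h : hamiltonianAdjoint n₁ n₂ ε R = 0) (k i : ℕ) :
    R.coeff (single 0 i + single 1 (k * (n₂ + 1) + n₂)) = 0 := by
  obtain ⟨hcol, -, hR⟩ := (hamiltonianAdjoint_eq_zero_iff hε).mp h
  induction k generalizing i with
  | zero => simpa using hcol i
  | succ k ih =>
    have hk := hR i (k * (n₂ + 1) + n₂)
    rw [ih, mul_zero, zero_add, show k * (n₂ + 1) + n₂ + (n₂ + 1) = (k + 1) * (n₂ + 1) + n₂ by
      ring] at hk
    exact (mul_eq_zero.mp ((mul_eq_zero.mp hk).resolve_left hε)).resolve_left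
      (factorial_mul_choose_ne_zero (Nat.le_add_left _ _))

theorem coeff_row_eq_zero_of_hamiltonianAdjoint_eq_zero (hε : ε ≠ 0)
    (h : hamiltonianAdjoint n₁ n₂ ε R = 0) (k j : ℕ) :
    R.coeff (single 0 (k * (n₁ + 1) + n₁) + single 1 j) = 0 := by
  obtain ⟨-, hrow, hR⟩ := (hamiltonianAdjoint_eq_zero_iff hε).mp h
  induction k generalizing j with
  | zero => simpa using hrow j
  | succ k ih =>
    have hk := hR (k * (n₁ + 1) + n₁) j
    rw [ih, mul_zero, mul_zero, add_zero, show k * (n₁ + 1) + n₁ + (n₁ + 1) =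
      (k + 1) * (n₁ + 1) + n₁ by ring] at hk
    exact (mul_eq_zero.mp hk).resolve_left
      (factorial_mul_choose_ne_zero (Nat.le_add_left _ _))

end TwoVariables

/-- **resonance equations (17).** Let `l ≥ m ≥ 2` and let `R` be a polynomial
in two variables. Then `x2·∂^{l−1}R/∂x1^{l−1} ± x1·∂^{m−1}R/∂x2^{m−1} = 0` holds iff for all
`i,j ≥ 0`: `R^{(i,m−1)} = 0`, `R^{(l−1,j)} = 0`, and
`(l−1)!·C(i+l,l−1)·R^{(i+l,j)} ± (m−1)!·C(j+m,m−1)·R^{(i,j+m)} = 0`. Consequently, if the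
equation holds then `R^{(i,km−1)} = 0` and `R^{(kl−1,j)} = 0` for all `k ≥ 1`. -/
theorem resonance_coeff_equations (l m : ℕ) (hm : 2 ≤ m) (hlm : m ≤ l) (ε : ℂ)
    (hε : ε = 1 ∨ ε = -1) (R : MvPolynomial (Fin 2) ℂ) :
    ((X 1 * ((pderiv (0 : Fin 2)).toLinearMap ^ (l - 1)) R
        + ε • (X 0 * ((pderiv (1 : Fin 2)).toLinearMap ^ (m - 1)) R) = 0) ↔
      (∀ i : ℕ, R.coeff (Finsupp.single 0 i + Finsupp.single 1 (m - 1)) = 0) ∧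
      (∀ j : ℕ, R.coeff (Finsupp.single 0 (l - 1) + Finsupp.single 1 j) = 0) ∧
      (∀ i j : ℕ,
        ((Nat.factorial (l - 1) : ℂ) * (Nat.choose (i + l) (l - 1) : ℂ)) *
            R.coeff (Finsupp.single 0 (i + l) + Finsupp.single 1 j)
          + ε * (((Nat.factorial (m - 1) : ℂ) * (Nat.choose (j + m) (m - 1) : ℂ)) *
            R.coeff (Finsupp.single 0 i + Finsupp.single 1 (j + m))) = 0)) ∧
    ((X 1 * ((pderiv (0 : Fin 2)).toLinearMap ^ (l - 1)) R
        + ε • (X 0 * ((pderiv (1 : Fin 2)).toLinearMap ^ (m - 1)) R) = 0) →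
      ∀ k : ℕ, 1 ≤ k → ∀ i j : ℕ,
        R.coeff (Finsupp.single 0 i + Finsupp.single 1 (k * m - 1)) = 0 ∧
        R.coeff (Finsupp.single 0 (k * l - 1) + Finsupp.single 1 j) = 0) := by
  obtain ⟨n₁, rfl⟩ : ∃ n, l = n + 1 := ⟨l - 1, by omega⟩
  obtain ⟨n₂, rfl⟩ : ∃ n, m = n + 1 := ⟨m - 1, by omega⟩
  have hε₀ : ε ≠ 0 := by rcases hε with rfl | rfl <;> norm_num
  simp only [Nat.add_sub_cancel]
  refine ⟨hamiltonianAdjoint_eq_zero_iff hε₀, fun h k hk i j ↦ ?_⟩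
  obtain ⟨k, rfl⟩ := Nat.exists_eq_add_of_le' hk
  have hsub (n : ℕ) : (k + 1) * (n + 1) - 1 = k * (n + 1) + n := by rw [Nat.succ_mul]; omega
  rw [hsub, hsub]
  exact ⟨coeff_column_eq_zero_of_hamiltonianAdjoint_eq_zero hε₀ h k i,
    coeff_row_eq_zero_of_hamiltonianAdjoint_eq_zero hε₀ h k j⟩
end
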